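/- arXiv:2011.10814 — 4 statements merged into one kernel-verified Lean document; each statement's English description precedes it below -/
import Mathlib

section
/- For a symmetric matrix P ∈ ℝ^{n×n} with 0 ≺ P ≺ γ²I and any y ∈ ℝ^n, the supremum over v ∈ ℝ^n of (vᵀPv − γ²|y − v|²) equals yᵀ(P⁻¹ − γ⁻²I)⁻¹y, and the supremum is attained. -/
/-!
With `M = γ²I - P ≻ 0` the objective is the concave quadratic
`v ↦ 2 (γ²y)ᵀv - vᵀMv - γ²|y|²`. Completing the square,
`2 bᵀv - vᵀMv = bᵀM⁻¹b - (v - M⁻¹b)ᵀM(v - M⁻¹b)`, so the maximum is attained at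
`v = γ²M⁻¹y` with value `yᵀ(γ⁴M⁻¹ - γ²I)y`, and
`(P⁻¹ - γ⁻²I)⁻¹ = γ⁴M⁻¹ - γ²I` because `P⁻¹ - γ⁻²I = γ⁻²P⁻¹M`.
-/

open Matrix

namespace Matrix

variable {ι : Type*} [Fintype ι]

theorem IsSymm.dotProduct_mulVec_comm {R : Type*} [CommSemiring R] {M : Matrix ι ι R}
    (hM : M.IsSymm) (u v : ι → R) : u ⬝ᵥ (M *ᵥ v) = v ⬝ᵥ (M *ᵥ u) := by
  rw [dotProduct_mulVec, ← mulVec_transpose, hM.eq, dotProduct_comm]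

variable [DecidableEq ι]

theorem two_mul_dotProduct_sub_dotProduct_mulVec_eq {R : Type*} [CommRing R] {M : Matrix ι ι R}
    (hM : M.IsSymm) (hdet : IsUnit M.det) (b v : ι → R) :
    2 * (b ⬝ᵥ v) - v ⬝ᵥ (M *ᵥ v) =
      b ⬝ᵥ (M⁻¹ *ᵥ b) - (v - M⁻¹ *ᵥ b) ⬝ᵥ (M *ᵥ (v - M⁻¹ *ᵥ b)) := by
  set u := M⁻¹ *ᵥ b
  have hb : M *ᵥ u = b := by simp [u, mulVec_mulVec, mul_nonsing_inv M hdet]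
  have hvu := hM.dotProduct_mulVec_comm u v
  rw [hb] at hvu
  simp only [mulVec_sub, dotProduct_sub, sub_dotProduct, hb, hvu, dotProduct_comm b v,
    dotProduct_comm b u]
  ring

theorem PosDef.isGreatest_two_mul_dotProduct_sub_dotProduct_mulVec {M : Matrix ι ι ℝ}
    (hM : M.PosDef) (b : ι → ℝ) :
    IsGreatest (Set.range fun v => 2 * (b ⬝ᵥ v) - v ⬝ᵥ (M *ᵥ v)) (b ⬝ᵥ (M⁻¹ *ᵥ b)) := by
  have hsymm : M.IsSymm := isHermitian_iff_isSymm.mp hM.isHermitian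
  have hdet : IsUnit M.det := hM.det_pos.ne'.isUnit
  simp only [two_mul_dotProduct_sub_dotProduct_mulVec_eq hsymm hdet b]
  refine ⟨⟨M⁻¹ *ᵥ b, by simp⟩, ?_⟩
  rintro _ ⟨v, rfl⟩
  simpa using hM.posSemidef.dotProduct_mulVec_nonneg (v - M⁻¹ *ᵥ b)

theorem inv_sub_inv_smul_one_eq {K : Type*} [Field K] {P : Matrix ι ι K} {c : K} (hc : c ≠ 0)
    (hP : IsUnit P.det) (hcP : IsUnit (c • 1 - P).det) :
    (P⁻¹ - c⁻¹ • 1)⁻¹ = c ^ 2 • (c • 1 - P)⁻¹ - c • 1 := by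
  set M := c • 1 - P
  have hleft : P⁻¹ - c⁻¹ • 1 = c⁻¹ • (P⁻¹ * M) := by
    rw [Matrix.mul_sub, Matrix.mul_smul, Matrix.mul_one, nonsing_inv_mul P hP, smul_sub,
      smul_smul, inv_mul_cancel₀ hc, one_smul]
  have hright : c ^ 2 • M⁻¹ - c • 1 = c • (M⁻¹ * P) := by
    rw [show P = c • 1 - M by simp [M], Matrix.mul_sub, Matrix.mul_smul, Matrix.mul_one,
      nonsing_inv_mul M hcP, smul_sub, smul_smul, sq]
  rw [hright, hleft]
  apply inv_eq_right_inv
  rw [Matrix.smul_mul, Matrix.mul_smul, smul_smul, inv_mul_cancel₀ hc, one_smul,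
    Matrix.mul_assoc, ← Matrix.mul_assoc M, mul_nonsing_inv M hcP, Matrix.one_mul,
    nonsing_inv_mul P hP]

end Matrix

theorem stmt0 (n : ℕ) (γ : ℝ) (hγ : 0 < γ)
    (P : Matrix (Fin n) (Fin n) ℝ) (hP : P.PosDef)
    (hPγ : (γ ^ 2 • (1 : Matrix (Fin n) (Fin n) ℝ) - P).PosDef)
    (y : Fin n → ℝ) :
    IsGreatest
      (Set.range fun v : Fin n → ℝ =>
        v ⬝ᵥ (P *ᵥ v) - γ ^ 2 * ((y - v) ⬝ᵥ (y - v)))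
      (y ⬝ᵥ ((P⁻¹ - (γ ^ 2)⁻¹ • (1 : Matrix (Fin n) (Fin n) ℝ))⁻¹ *ᵥ y)) := by
  set c := γ ^ 2
  set M := c • (1 : Matrix (Fin n) (Fin n) ℝ) - P
  have hobjective : (fun v : Fin n → ℝ => v ⬝ᵥ (P *ᵥ v) - c * ((y - v) ⬝ᵥ (y - v))) =
      fun v => (2 * ((c • y) ⬝ᵥ v) - v ⬝ᵥ (M *ᵥ v)) - c * (y ⬝ᵥ y) := by
    ext v
    simp only [M, sub_mulVec, smul_mulVec, one_mulVec, dotProduct_sub, sub_dotProduct,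
      dotProduct_smul, smul_dotProduct, smul_eq_mul, dotProduct_comm v y]
    ring
  have hvalue : y ⬝ᵥ ((P⁻¹ - c⁻¹ • 1)⁻¹ *ᵥ y) = (c • y) ⬝ᵥ (M⁻¹ *ᵥ (c • y)) - c * (y ⬝ᵥ y) := by
    rw [inv_sub_inv_smul_one_eq (by positivity) hP.det_pos.ne'.isUnit hPγ.det_pos.ne'.isUnit]
    simp only [sub_mulVec, smul_mulVec, one_mulVec, mulVec_smul, dotProduct_sub, dotProduct_smul,
      smul_dotProduct, smul_eq_mul]
    ring
  rw [hobjective, hvalue, Set.range_comp' (· - c * (y ⬝ᵥ y))]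
  have hmono : Monotone (· - c * (y ⬝ᵥ y)) := fun _ _ h => sub_le_sub_right h _
  exact hmono.map_isGreatest (hPγ.isGreatest_two_mul_dotProduct_sub_dotProduct_mulVec (c • y))
end

section
/- For a symmetric matrix T ∈ ℝ^{n×n} with 0 ≺ T ≺ γ²I and any y₁, y₂ ∈ ℝ^n, the supremum over v ∈ ℝ^n of (vᵀTv − (γ²/2)|y₁ − v|² − (γ²/2)|y₂ − v|²) equals ((y₁+y₂)/2)ᵀ(T⁻¹ − γ⁻²I)⁻¹((y₁+y₂)/2) − γ²|(y₁ − y₂)/2|². -/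
/-!
With `A = γ²I - T ≻ 0`, `m = (y₁ + y₂)/2` and `d = (y₁ - y₂)/2`, the midpoint identity
`|y₁ - v|² + |y₂ - v|² = 2|m - v|² + 2|d|²` turns the objective into
`2 (γ²m)ᵀv - vᵀAv - γ²|m|² - γ²|d|²`, a concave quadratic whose maximum, by completing the square,
is attained at `v = γ² A⁻¹ m`. The value matches the claimed one because
`(T⁻¹ - γ⁻²I)⁻¹ = γ⁴A⁻¹ - γ²I`.
-/

open Matrix

namespace Matrix

variable {ι : Type*} [Fintype ι]

theorem IsSymm.dotProduct_mulVec_comm_s1 {R : Type*} [CommSemiring R] {A : Matrix ι ι R}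
    (hA : A.IsSymm) (x y : ι → R) :
    x ⬝ᵥ A *ᵥ y = y ⬝ᵥ A *ᵥ x := by
  rw [dotProduct_mulVec, ← vecMul_transpose, hA.eq, dotProduct_comm]

variable [DecidableEq ι]

theorem PosDef.quadForm_sub_inv_mulVec {A : Matrix ι ι ℝ} (hA : A.PosDef) (b v : ι → ℝ) :
    (v - A⁻¹ *ᵥ b) ⬝ᵥ A *ᵥ (v - A⁻¹ *ᵥ b)
      = b ⬝ᵥ A⁻¹ *ᵥ b - (2 * (b ⬝ᵥ v) - v ⬝ᵥ A *ᵥ v) := by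
  have hAw : A *ᵥ (A⁻¹ *ᵥ b) = b := by
    rw [mulVec_mulVec, mul_nonsing_inv A hA.det_pos.ne'.isUnit, one_mulVec]
  have hsymm : (A⁻¹ *ᵥ b) ⬝ᵥ A *ᵥ v = v ⬝ᵥ A *ᵥ (A⁻¹ *ᵥ b) :=
    (isHermitian_iff_isSymm.mp hA.isHermitian).dotProduct_mulVec_comm_s1 _ _
  rw [mulVec_sub, dotProduct_sub, sub_dotProduct, sub_dotProduct, hsymm, hAw,
    dotProduct_comm v b, dotProduct_comm (A⁻¹ *ᵥ b) b]
  ring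

theorem PosDef.isGreatest_range_two_dotProduct_sub_quadForm {A : Matrix ι ι ℝ} (hA : A.PosDef)
    (b : ι → ℝ) :
    IsGreatest (Set.range fun v => 2 * (b ⬝ᵥ v) - v ⬝ᵥ A *ᵥ v) (b ⬝ᵥ A⁻¹ *ᵥ b) := by
  refine ⟨⟨A⁻¹ *ᵥ b, ?_⟩, ?_⟩
  · have := hA.quadForm_sub_inv_mulVec b (A⁻¹ *ᵥ b)
    simp only [sub_self, zero_dotProduct] at this
    linarith
  · rintro _ ⟨v, rfl⟩
    have := hA.quadForm_sub_inv_mulVec b v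
    have hnonneg := hA.posSemidef.dotProduct_mulVec_nonneg (v - A⁻¹ *ᵥ b)
    rw [star_trivial] at hnonneg
    linarith

variable {K : Type*} [Field K]

theorem inv_inv_sub_inv_smul_one {T : Matrix ι ι K} {c : K} (hc : c ≠ 0) (hT : IsUnit T.det)
    (hcT : IsUnit (c • (1 : Matrix ι ι K) - T).det) :
    (T⁻¹ - c⁻¹ • (1 : Matrix ι ι K))⁻¹ = c ^ 2 • (c • (1 : Matrix ι ι K) - T)⁻¹ - c • 1 := by
  set A := c • (1 : Matrix ι ι K) - T
  have hTA : T⁻¹ * A = c • T⁻¹ - 1 := by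
    rw [Matrix.mul_sub, Matrix.mul_smul, Matrix.mul_one, nonsing_inv_mul T hT]
  have hfactor : T⁻¹ - c⁻¹ • (1 : Matrix ι ι K) = c⁻¹ • (T⁻¹ * A) := by
    rw [hTA, smul_sub, smul_smul, inv_mul_cancel₀ hc, one_smul]
  apply inv_eq_right_inv
  calc (T⁻¹ - c⁻¹ • 1) * (c ^ 2 • A⁻¹ - c • 1)
      = c • (T⁻¹ * (A * A⁻¹)) - T⁻¹ * A := by
        rw [hfactor, Matrix.mul_sub, Matrix.mul_smul, Matrix.mul_smul, Matrix.smul_mul,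
          Matrix.smul_mul, smul_smul, smul_smul, Matrix.mul_one, Matrix.mul_assoc]
        congr 2
        · field_simp
        · rw [mul_inv_cancel₀ hc, one_smul]
    _ = 1 := by rw [mul_nonsing_inv A hcT, Matrix.mul_one, hTA, sub_sub_cancel]

end Matrix

theorem sub_dotProduct_sub_add_sub_dotProduct_sub {ι : Type*} [Fintype ι] (y₁ y₂ v : ι → ℝ) :
    (y₁ - v) ⬝ᵥ (y₁ - v) + (y₂ - v) ⬝ᵥ (y₂ - v)
      = 2 * (((1 / 2 : ℝ) • (y₁ + y₂) - v) ⬝ᵥ ((1 / 2 : ℝ) • (y₁ + y₂) - v))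
        + 2 * (((1 / 2 : ℝ) • (y₁ - y₂)) ⬝ᵥ ((1 / 2 : ℝ) • (y₁ - y₂))) := by
  simp only [dotProduct, Pi.sub_apply, Pi.add_apply, Pi.smul_apply, smul_eq_mul, Finset.mul_sum,
    ← Finset.sum_add_distrib]
  refine Finset.sum_congr rfl fun i _ => ?_
  ring

theorem stmt1 (n : ℕ) (γ : ℝ) (hγ : 0 < γ)
    (T : Matrix (Fin n) (Fin n) ℝ) (hT : T.PosDef)
    (hTγ : (γ ^ 2 • (1 : Matrix (Fin n) (Fin n) ℝ) - T).PosDef)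
    (y₁ y₂ : Fin n → ℝ) :
    IsGreatest
      (Set.range fun v : Fin n → ℝ =>
        v ⬝ᵥ (T *ᵥ v) - γ ^ 2 / 2 * ((y₁ - v) ⬝ᵥ (y₁ - v))
          - γ ^ 2 / 2 * ((y₂ - v) ⬝ᵥ (y₂ - v)))
      (((1 / 2 : ℝ) • (y₁ + y₂)) ⬝ᵥ
          ((T⁻¹ - (γ ^ 2)⁻¹ • (1 : Matrix (Fin n) (Fin n) ℝ))⁻¹ *ᵥ
            ((1 / 2 : ℝ) • (y₁ + y₂)))
        - γ ^ 2 * (((1 / 2 : ℝ) • (y₁ - y₂)) ⬝ᵥ ((1 / 2 : ℝ) • (y₁ - y₂)))) := by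
  set A := γ ^ 2 • (1 : Matrix (Fin n) (Fin n) ℝ) - T
  set m := (1 / 2 : ℝ) • (y₁ + y₂)
  set d := (1 / 2 : ℝ) • (y₁ - y₂)
  set C := γ ^ 2 * (m ⬝ᵥ m) + γ ^ 2 * (d ⬝ᵥ d)
  have hobjective : (fun v => v ⬝ᵥ (T *ᵥ v) - γ ^ 2 / 2 * ((y₁ - v) ⬝ᵥ (y₁ - v))
      - γ ^ 2 / 2 * ((y₂ - v) ⬝ᵥ (y₂ - v)))
      = (· - C) ∘ fun v => 2 * ((γ ^ 2 • m) ⬝ᵥ v) - v ⬝ᵥ A *ᵥ v := by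
    funext v
    have hA : v ⬝ᵥ A *ᵥ v = γ ^ 2 * (v ⬝ᵥ v) - v ⬝ᵥ T *ᵥ v := by
      rw [sub_mulVec, smul_mulVec, one_mulVec, dotProduct_sub, dotProduct_smul, smul_eq_mul]
    have hmidpoint : (y₁ - v) ⬝ᵥ (y₁ - v) + (y₂ - v) ⬝ᵥ (y₂ - v)
        = 2 * ((m - v) ⬝ᵥ (m - v)) + 2 * (d ⬝ᵥ d) :=
      sub_dotProduct_sub_add_sub_dotProduct_sub y₁ y₂ v
    have hm : (m - v) ⬝ᵥ (m - v) = m ⬝ᵥ m - 2 * (m ⬝ᵥ v) + v ⬝ᵥ v := by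
      rw [sub_dotProduct, dotProduct_sub, dotProduct_sub, dotProduct_comm v m]
      ring
    simp only [Function.comp_apply, smul_dotProduct, smul_eq_mul, C]
    linear_combination hA - γ ^ 2 / 2 * hmidpoint - γ ^ 2 * hm
  have hvalue : m ⬝ᵥ (((γ ^ 2) ^ 2 • A⁻¹ - γ ^ 2 • 1) *ᵥ m) - γ ^ 2 * (d ⬝ᵥ d)
      = (γ ^ 2 • m) ⬝ᵥ A⁻¹ *ᵥ (γ ^ 2 • m) - C := by
    simp only [sub_mulVec, smul_mulVec, one_mulVec, mulVec_smul, dotProduct_sub, dotProduct_smul,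
      smul_dotProduct, smul_eq_mul, C]
    ring
  rw [inv_inv_sub_inv_smul_one (by positivity) hT.det_pos.ne'.isUnit hTγ.det_pos.ne'.isUnit,
    hvalue, hobjective, Set.range_comp]
  have hshift : Monotone (· - C) := fun _ _ h => sub_le_sub_right h C
  exact hshift.map_isGreatest (hTγ.isGreatest_range_two_dotProduct_sub_quadForm (γ ^ 2 • m))
end

section
/- Let V₀(x, Z) = −γ² · min over (A,B) in a finite nonempty set 𝓜 of trace([I A B] Z [I A B]ᵀ), and define V₁(x, Z) = min_u max_v { xᵀQx + uᵀRu + V₀(v, Z + z zᵀ) } where z = (−v, x, u). If Q and R are positive semidefinite and Z is positive semidefinite, then V₁(x, Z) ≥ V₀(x, Z) for all x. -/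
/-!
Adding `z zᵀ` to `Z` adds `|N z|²` to every cost `trace (N Z Nᵀ)`, so the minimum over `𝓜`
can only grow and `V₀` can only shrink: the supremum over `v` is finite. Choosing
`v = A x + B u` for a minimiser `(A, B)` of `trace ([I A B] Z [I A B]ᵀ)` makes `[I A B] z = 0`,
so for that `v` the minimum is unchanged and the objective is `xᵀQx + uᵀRu + V₀(x, Z) ≥ V₀(x, Z)`.
-/

open Matrix

section

variable {ι k l : Type*} [Fintype l]

theorem Matrix.trace_mul_vecMulVec_mul_transpose {R : Type*} [CommSemiring R] [Fintype k]
    (N : Matrix k l R) (a b : l → R) :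
    (N * vecMulVec a b * Nᵀ).trace = (N *ᵥ a) ⬝ᵥ (N *ᵥ b) := by
  rw [mul_vecMulVec, vecMulVec_mul, trace_vecMulVec, vecMul_transpose]

theorem Matrix.trace_mul_add_vecMulVec_self_mul_transpose [Fintype k]
    (N : Matrix k l ℝ) (Z : Matrix l l ℝ) (z : l → ℝ) :
    (N * (Z + vecMulVec z z) * Nᵀ).trace = (N * Z * Nᵀ).trace + (N *ᵥ z) ⬝ᵥ (N *ᵥ z) := by
  rw [Matrix.mul_add, Matrix.add_mul, trace_add, trace_mul_vecMulVec_mul_transpose]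

theorem Finset.inf'_trace_le_inf'_trace_add_vecMulVec [Fintype k] {S : Finset ι}
    (hS : S.Nonempty) (N : ι → Matrix k l ℝ) (Z : Matrix l l ℝ) (z : l → ℝ) :
    S.inf' hS (fun i => (N i * Z * (N i)ᵀ).trace) ≤
      S.inf' hS (fun i => (N i * (Z + vecMulVec z z) * (N i)ᵀ).trace) := by
  refine Finset.le_inf' hS _ fun i hi => ?_
  rw [trace_mul_add_vecMulVec_self_mul_transpose]
  exact le_add_of_le_of_nonneg (Finset.inf'_le _ hi) (dotProduct_self_star_nonneg _)

theorem Finset.inf'_trace_add_vecMulVec_le_of_mulVec_eq_zero [Fintype k] {S : Finset ι}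
    (hS : S.Nonempty) (N : ι → Matrix k l ℝ) (Z : Matrix l l ℝ) {z : l → ℝ} {i₀ : ι}
    (hi₀ : i₀ ∈ S) (hmin : S.inf' hS (fun i => (N i * Z * (N i)ᵀ).trace) =
      (N i₀ * Z * (N i₀)ᵀ).trace) (hz : N i₀ *ᵥ z = 0) :
    S.inf' hS (fun i => (N i * (Z + vecMulVec z z) * (N i)ᵀ).trace) ≤
      S.inf' hS (fun i => (N i * Z * (N i)ᵀ).trace) := by
  refine (Finset.inf'_le _ hi₀).trans_eq ?_
  rw [trace_mul_add_vecMulVec_self_mul_transpose, hz, dotProduct_zero, add_zero, hmin]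

end

theorem Matrix.fromCols_one_fromCols_mulVec_sumElim {n m : Type*} [Fintype n] [DecidableEq n]
    [Fintype m] (A : Matrix n n ℝ) (B : Matrix n m ℝ) (v x : n → ℝ) (u : m → ℝ) :
    fromCols 1 (fromCols A B) *ᵥ Sum.elim (-v) (Sum.elim x u) = A *ᵥ x + B *ᵥ u - v := by
  rw [fromCols_mulVec_sumElim, fromCols_mulVec_sumElim, one_mulVec, neg_add_eq_sub]

theorem stmt5_general (n m : ℕ) (γ : ℝ)
    (Q : Matrix (Fin n) (Fin n) ℝ) (R : Matrix (Fin m) (Fin m) ℝ)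
    (hQ : Q.PosSemidef) (hR : R.PosSemidef)
    (M : Finset (Matrix (Fin n) (Fin n) ℝ × Matrix (Fin n) (Fin m) ℝ))
    (hM : M.Nonempty)
    (Z : Matrix (Fin n ⊕ (Fin n ⊕ Fin m)) (Fin n ⊕ (Fin n ⊕ Fin m)) ℝ)
    (x : Fin n → ℝ) :
    let blk := fun (p : Matrix (Fin n) (Fin n) ℝ × Matrix (Fin n) (Fin m) ℝ) =>
      Matrix.fromCols (1 : Matrix (Fin n) (Fin n) ℝ) (Matrix.fromCols p.1 p.2)
    let V₀ := fun (Z' : Matrix (Fin n ⊕ (Fin n ⊕ Fin m)) (Fin n ⊕ (Fin n ⊕ Fin m)) ℝ) =>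
      -γ ^ 2 * M.inf' hM (fun p => (blk p * Z' * (blk p)ᵀ).trace)
    (⨅ u : Fin m → ℝ, ⨆ v : Fin n → ℝ,
        (x ⬝ᵥ (Q *ᵥ x) + u ⬝ᵥ (R *ᵥ u) +
          V₀ (Z + vecMulVec (Sum.elim (-v) (Sum.elim x u)) (Sum.elim (-v) (Sum.elim x u)))))
      ≥ V₀ Z := by
  intro blk V₀
  have hγ : -γ ^ 2 ≤ 0 := neg_nonpos.2 (sq_nonneg γ)
  have hQx : 0 ≤ x ⬝ᵥ (Q *ᵥ x) := by simpa using hQ.dotProduct_mulVec_nonneg x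
  refine le_ciInf fun u => ?_
  have hRu : 0 ≤ u ⬝ᵥ (R *ᵥ u) := by simpa using hR.dotProduct_mulVec_nonneg u
  have hV₀_le (v : Fin n → ℝ) :
      V₀ (Z + vecMulVec (Sum.elim (-v) (Sum.elim x u)) (Sum.elim (-v) (Sum.elim x u))) ≤ V₀ Z :=
    mul_le_mul_of_nonpos_left (Finset.inf'_trace_le_inf'_trace_add_vecMulVec hM blk Z _) hγ
  obtain ⟨p₀, hp₀, hmin⟩ := Finset.exists_mem_eq_inf' hM fun p => (blk p * Z * (blk p)ᵀ).trace
  set v₀ := p₀.1 *ᵥ x + p₀.2 *ᵥ u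
  have hz : blk p₀ *ᵥ Sum.elim (-v₀) (Sum.elim x u) = 0 := by
    rw [fromCols_one_fromCols_mulVec_sumElim, sub_self]
  have hV₀_ge : V₀ Z ≤
      V₀ (Z + vecMulVec (Sum.elim (-v₀) (Sum.elim x u)) (Sum.elim (-v₀) (Sum.elim x u))) :=
    mul_le_mul_of_nonpos_left
      (Finset.inf'_trace_add_vecMulVec_le_of_mulVec_eq_zero hM blk Z hp₀ hmin hz) hγ
  refine le_ciSup_of_le ⟨_, Set.forall_mem_range.2 fun v => add_le_add_right (hV₀_le v) _⟩ v₀ ?_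
  linarith

theorem stmt5 (n m : ℕ) (γ : ℝ) (hγ : 0 < γ)
    (Q : Matrix (Fin n) (Fin n) ℝ) (R : Matrix (Fin m) (Fin m) ℝ)
    (hQ : Q.PosSemidef) (hR : R.PosSemidef)
    (M : Finset (Matrix (Fin n) (Fin n) ℝ × Matrix (Fin n) (Fin m) ℝ))
    (hM : M.Nonempty)
    (Z : Matrix (Fin n ⊕ (Fin n ⊕ Fin m)) (Fin n ⊕ (Fin n ⊕ Fin m)) ℝ)
    (hZ : Z.PosSemidef) (x : Fin n → ℝ) :
    let blk := fun (p : Matrix (Fin n) (Fin n) ℝ × Matrix (Fin n) (Fin m) ℝ) =>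
      Matrix.fromCols (1 : Matrix (Fin n) (Fin n) ℝ) (Matrix.fromCols p.1 p.2)
    let V₀ := fun (Z' : Matrix (Fin n ⊕ (Fin n ⊕ Fin m)) (Fin n ⊕ (Fin n ⊕ Fin m)) ℝ) =>
      -γ ^ 2 * M.inf' hM (fun p => (blk p * Z' * (blk p)ᵀ).trace)
    (⨅ u : Fin m → ℝ, ⨆ v : Fin n → ℝ,
        (x ⬝ᵥ (Q *ᵥ x) + u ⬝ᵥ (R *ᵥ u) +
          V₀ (Z + vecMulVec (Sum.elim (-v) (Sum.elim x u)) (Sum.elim (-v) (Sum.elim x u)))))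
      ≥ V₀ Z :=
  stmt5_general n m γ Q R hQ hR M hM Z x
end

section
/- Let P_{ij} ∈ ℝ^{n×n} be symmetric with 0 ≺ P_{ij} ≺ γ²I, let A_i, A_j ∈ ℝ^{n×n}, B_i, B_j ∈ ℝ^{n×m}, u ∈ ℝ^m, x ∈ ℝ^n. Then max over v ∈ ℝ^n of { |v|²_{P_{ij}} − (γ²/2)|A_ix + B_iu − v|² − (γ²/2)|A_jx + B_ju − v|² } = |((A_i + A_j)x + (B_i + B_j)u)/2|²_{(P_{ij}⁻¹ − γ⁻²I)⁻¹} − γ²|((A_i − A_j)x + (B_i − B_j)u)/2|². -/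
/-!
Averaging the two penalty terms (parallelogram law) turns the objective into
`2 ⟪v, γ² s⟫ - vᵀ Q v` minus a constant, where `s` is the mean of the two predicted states and
`Q = γ² I - P ≻ 0`. Completing the square, this concave quadratic is maximal at `v = γ² Q⁻¹ s`
with value `γ⁴ sᵀ Q⁻¹ s`, and `(P⁻¹ - γ⁻² I)⁻¹ = γ⁴ Q⁻¹ - γ² I` turns the result into the stated
form.
-/

open Matrix

section

variable {ι : Type*} [Fintype ι]

theorem dotProduct_sub_self_add_dotProduct_sub_self (y₁ y₂ v : ι → ℝ) :
    (y₁ - v) ⬝ᵥ (y₁ - v) + (y₂ - v) ⬝ᵥ (y₂ - v)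
      = 2 * ((v - (1 / 2 : ℝ) • (y₁ + y₂)) ⬝ᵥ (v - (1 / 2 : ℝ) • (y₁ + y₂)))
        + 2 * (((1 / 2 : ℝ) • (y₁ - y₂)) ⬝ᵥ ((1 / 2 : ℝ) • (y₁ - y₂))) := by
  simp only [dotProduct_sub, sub_dotProduct, dotProduct_add, add_dotProduct, dotProduct_smul,
    smul_dotProduct, smul_eq_mul, dotProduct_comm y₂ y₁, dotProduct_comm v y₁,
    dotProduct_comm v y₂]
  ring

variable [DecidableEq ι]

theorem dotProduct_mulVec_sub_half_dotProduct_sub_self (P : Matrix ι ι ℝ) (c : ℝ)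
    (y₁ y₂ v : ι → ℝ) :
    v ⬝ᵥ (P *ᵥ v) - c / 2 * ((y₁ - v) ⬝ᵥ (y₁ - v)) - c / 2 * ((y₂ - v) ⬝ᵥ (y₂ - v))
      = (2 * (v ⬝ᵥ (c • (1 / 2 : ℝ) • (y₁ + y₂))) - v ⬝ᵥ ((c • 1 - P) *ᵥ v))
        + (-c * (((1 / 2 : ℝ) • (y₁ + y₂)) ⬝ᵥ ((1 / 2 : ℝ) • (y₁ + y₂)))
          - c * (((1 / 2 : ℝ) • (y₁ - y₂)) ⬝ᵥ ((1 / 2 : ℝ) • (y₁ - y₂)))) := by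
  have hsum := dotProduct_sub_self_add_dotProduct_sub_self y₁ y₂ v
  set s := (1 / 2 : ℝ) • (y₁ + y₂)
  set d := (1 / 2 : ℝ) • (y₁ - y₂)
  rw [sub_sub, ← mul_add, hsum]
  simp only [sub_mulVec, smul_mulVec, one_mulVec, dotProduct_sub, sub_dotProduct,
    dotProduct_smul, smul_eq_mul, dotProduct_comm s v]
  ring

theorem two_mul_dotProduct_sub_dotProduct_mulVec {R : Type*} [CommRing R] {Q : Matrix ι ι R}
    (hQ : Q.IsSymm) (hdet : IsUnit Q.det) (b v : ι → R) :
    2 * (v ⬝ᵥ b) - v ⬝ᵥ (Q *ᵥ v)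
      = b ⬝ᵥ (Q⁻¹ *ᵥ b) - (v - Q⁻¹ *ᵥ b) ⬝ᵥ (Q *ᵥ (v - Q⁻¹ *ᵥ b)) := by
  have hb : Q *ᵥ (Q⁻¹ *ᵥ b) = b := by
    rw [mulVec_mulVec, mul_nonsing_inv Q hdet, one_mulVec]
  have hsymm : (Q⁻¹ *ᵥ b) ⬝ᵥ (Q *ᵥ v) = v ⬝ᵥ b := by
    rw [dotProduct_mulVec, ← mulVec_transpose, hQ.eq, hb, dotProduct_comm]
  rw [mulVec_sub, hb, dotProduct_sub, sub_dotProduct, sub_dotProduct, hsymm,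
    dotProduct_comm (Q⁻¹ *ᵥ b) b]
  ring

theorem isGreatest_range_two_mul_dotProduct_sub_dotProduct_mulVec {Q : Matrix ι ι ℝ}
    (hQ : Q.PosDef) (b : ι → ℝ) :
    IsGreatest (Set.range fun v => 2 * (v ⬝ᵥ b) - v ⬝ᵥ (Q *ᵥ v)) (b ⬝ᵥ (Q⁻¹ *ᵥ b)) := by
  have hsymm : Q.IsSymm := by simpa using hQ.isHermitian
  have hdet : IsUnit Q.det := (isUnit_iff_isUnit_det Q).1 hQ.isUnit
  simp only [two_mul_dotProduct_sub_dotProduct_mulVec hsymm hdet b]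
  refine ⟨⟨Q⁻¹ *ᵥ b, by simp⟩, ?_⟩
  rintro _ ⟨v, rfl⟩
  simpa using hQ.posSemidef.dotProduct_mulVec_nonneg (v - Q⁻¹ *ᵥ b)

theorem inv_sub_inv_smul_one_inv {K : Type*} [Field K] {P : Matrix ι ι K} {c : K} (hc : c ≠ 0)
    (hP : IsUnit P.det) (hQ : IsUnit (c • 1 - P).det) :
    (P⁻¹ - c⁻¹ • 1)⁻¹ = c ^ 2 • (c • 1 - P)⁻¹ - c • 1 := by
  set Q := c • 1 - P
  have hleft : P⁻¹ - c⁻¹ • 1 = c⁻¹ • (P⁻¹ * Q) := by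
    rw [Matrix.mul_sub, Matrix.mul_smul, Matrix.mul_one, nonsing_inv_mul P hP, smul_sub,
      smul_smul, inv_mul_cancel₀ hc, one_smul]
  have hright : c ^ 2 • Q⁻¹ - c • 1 = c • (Q⁻¹ * P) := by
    rw [show P = c • 1 - Q by simp [Q], Matrix.mul_sub, Matrix.mul_smul, Matrix.mul_one,
      nonsing_inv_mul Q hQ, smul_sub, smul_smul, sq]
  refine inv_eq_right_inv ?_
  rw [hleft, hright, smul_mul_smul_comm, inv_mul_cancel₀ hc, one_smul, Matrix.mul_assoc,
    ← Matrix.mul_assoc Q, mul_nonsing_inv Q hQ, Matrix.one_mul, nonsing_inv_mul P hP]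

theorem stmt13 (n m : ℕ) (γ : ℝ) (hγ : 0 < γ)
    (Pij : Matrix (Fin n) (Fin n) ℝ) (hP : Pij.PosDef)
    (hPγ : (γ ^ 2 • (1 : Matrix (Fin n) (Fin n) ℝ) - Pij).PosDef)
    (Ai Aj : Matrix (Fin n) (Fin n) ℝ) (Bi Bj : Matrix (Fin n) (Fin m) ℝ)
    (x : Fin n → ℝ) (u : Fin m → ℝ) :
    IsGreatest
      (Set.range fun v : Fin n → ℝ =>
        v ⬝ᵥ (Pij *ᵥ v)
          - γ ^ 2 / 2 * ((Ai *ᵥ x + Bi *ᵥ u - v) ⬝ᵥ (Ai *ᵥ x + Bi *ᵥ u - v))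
          - γ ^ 2 / 2 * ((Aj *ᵥ x + Bj *ᵥ u - v) ⬝ᵥ (Aj *ᵥ x + Bj *ᵥ u - v)))
      (((1 / 2 : ℝ) • ((Ai + Aj) *ᵥ x + (Bi + Bj) *ᵥ u)) ⬝ᵥ
          ((Pij⁻¹ - (γ ^ 2)⁻¹ • (1 : Matrix (Fin n) (Fin n) ℝ))⁻¹ *ᵥ
            ((1 / 2 : ℝ) • ((Ai + Aj) *ᵥ x + (Bi + Bj) *ᵥ u)))
        - γ ^ 2 * (((1 / 2 : ℝ) • ((Ai - Aj) *ᵥ x + (Bi - Bj) *ᵥ u)) ⬝ᵥ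
            ((1 / 2 : ℝ) • ((Ai - Aj) *ᵥ x + (Bi - Bj) *ᵥ u)))) := by
  set y₁ := Ai *ᵥ x + Bi *ᵥ u
  set y₂ := Aj *ᵥ x + Bj *ᵥ u
  have hsum : (Ai + Aj) *ᵥ x + (Bi + Bj) *ᵥ u = y₁ + y₂ := by
    simp only [y₁, y₂, add_mulVec]; abel
  have hdiff : (Ai - Aj) *ᵥ x + (Bi - Bj) *ᵥ u = y₁ - y₂ := by
    simp only [y₁, y₂, sub_mulVec]; abel
  set s := (1 / 2 : ℝ) • (y₁ + y₂)
  set d := (1 / 2 : ℝ) • (y₁ - y₂)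
  set Q := γ ^ 2 • (1 : Matrix (Fin n) (Fin n) ℝ) - Pij
  set c := -γ ^ 2 * (s ⬝ᵥ s) - γ ^ 2 * (d ⬝ᵥ d)
  have hQinv : IsUnit Q.det := (isUnit_iff_isUnit_det Q).1 hPγ.isUnit
  have hvalue : s ⬝ᵥ ((Pij⁻¹ - (γ ^ 2)⁻¹ • 1)⁻¹ *ᵥ s) - γ ^ 2 * (d ⬝ᵥ d)
      = (γ ^ 2 • s) ⬝ᵥ (Q⁻¹ *ᵥ (γ ^ 2 • s)) + c := by
    rw [inv_sub_inv_smul_one_inv (by positivity) ((isUnit_iff_isUnit_det _).1 hP.isUnit) hQinv]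
    simp only [sub_mulVec, smul_mulVec, one_mulVec, mulVec_smul, dotProduct_sub,
      dotProduct_smul, smul_dotProduct, smul_eq_mul, c]
    ring
  have hrange : (Set.range fun v => v ⬝ᵥ (Pij *ᵥ v) - γ ^ 2 / 2 * ((y₁ - v) ⬝ᵥ (y₁ - v))
      - γ ^ 2 / 2 * ((y₂ - v) ⬝ᵥ (y₂ - v)))
      = (· + c) '' Set.range fun v => 2 * (v ⬝ᵥ (γ ^ 2 • s)) - v ⬝ᵥ (Q *ᵥ v) := by
    rw [← Set.range_comp]
    exact congrArg Set.range (funext (dotProduct_mulVec_sub_half_dotProduct_sub_self _ _ y₁ y₂))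
  rw [hsum, hdiff, hvalue, hrange]
  exact (add_left_mono (a := c)).map_isGreatest
    (isGreatest_range_two_mul_dotProduct_sub_dotProduct_mulVec hPγ _)
end
end
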